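/- Let α: G → Aut(A) be a tracially amenable action of a discrete group G on a separable unital C*-algebra A with T(A) ≠ ∅. Then the induced action of G on the trace space T(A) (a compact convex set with the weak-* topology) is topologically amenable. -/

import Mathlib

noncomputable section

variable {G : Type*} [Group G] {A : Type*} [CStarAlgebra A]

/-- A tracial state on a unital C*-algebra. -/
def IsTracialState (τ : A →ₗ[ℂ] ℂ) : Prop :=
  τ 1 = 1 ∧ (∀ a : A, 0 ≤ (τ (star a * a)).re ∧ (τ (star a * a)).im = 0) ∧
    ∀ a b : A, τ (a * b) = τ (b * a)

/-- The trace space `T(A)`. -/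
def TS (A : Type*) [CStarAlgebra A] : Type _ := {τ : A →ₗ[ℂ] ℂ // IsTracialState τ}

/-- The weak-* topology on the trace space. -/
instance : TopologicalSpace (TS A) :=
  TopologicalSpace.induced (fun τ : TS A => (τ.1 : A → ℂ)) inferInstance

/-- The inner product `⟨ξ,η⟩ = ∑_g ξ(g)* η(g)` on `C_c(G,A) ⊆ ℓ²(G,A)`. -/
def ip (ξ η : G →₀ A) : A := ξ.sum fun g a => star a * η g

/-- The uniform 2-seminorm on `A`. -/
def u2 (a : A) : ℝ := ⨆ τ : TS A, Real.sqrt ((τ.1 (star a * a)).re)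

/-- The uniform 2-seminorm on `ℓ²(G,A)`. -/
def u2l (ξ : G →₀ A) : ℝ := ⨆ τ : TS A, Real.sqrt ((τ.1 (ip ξ ξ)).re)

/-- Left multiplication `a·ξ`. -/
def lmul (a : A) (ξ : G →₀ A) : G →₀ A := ξ.mapRange (fun x => a * x) (by simp)

/-- Right multiplication `ξ·a`. -/
def rmul (ξ : G →₀ A) (a : A) : G →₀ A := ξ.mapRange (fun x => x * a) (by simp)

/-- The diagonal action `α̃_g(ξ)(h) = α_g(ξ(g⁻¹h))`. -/
def diagAct (α : G →* (A ≃ₐ[ℂ] A)) (g : G) (ξ : G →₀ A) : G →₀ A :=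
  (ξ.mapDomain fun h => g * h).mapRange (α g) (map_zero _)

/-- Tracial amenability of an action (Definition 2.2). -/
def IsTraciallyAmenable (α : G →* (A ≃ₐ[ℂ] A)) : Prop :=
  ∀ (F : Finset A) (K : Finset G) (ε : ℝ), 0 < ε →
    ∃ ξ : G →₀ A, Real.sqrt ‖ip ξ ξ‖ ≤ 1 ∧
      (∀ a ∈ F, u2l (rmul ξ a - lmul a ξ) < ε) ∧
      u2 (ip ξ ξ - 1) < ε ∧
      ∀ g ∈ K, u2l (diagAct α g ξ - ξ) < ε

/-- Topological amenability of an action `ρ` of a discrete group `G` on a compact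
space `X`, via finitely supported positive type functions `θ : G → C(X,ℝ)` with
`θ(e) ≤ 1` and `θ(g) → 1` uniformly (on compact `X`, `∀ x, |θ g x - 1| < ε` is
equivalent to `‖θ g - 1‖ < ε`). -/
def TopologicallyAmenableAction {G X : Type*} [Group G] [TopologicalSpace X]
    (ρ : G → X → X) : Prop :=
  ∀ (K : Finset G) (ε : ℝ), 0 < ε →
    ∃ (S : Finset G) (θ : G → C(X, ℝ)),
      (∀ g ∉ S, θ g = 0) ∧
      (∀ (L : Finset G) (x : X),
        Matrix.PosSemidef (Matrix.of fun g h : L => θ ((g : G)⁻¹ * h) (ρ (g : G)⁻¹ x))) ∧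
      (∀ x, θ 1 x ≤ 1) ∧
      ∀ g ∈ K, ∀ x, |θ g x - 1| < ε


/-!
Take `ξ` as in tracial amenability and put `θ g τ = Re τ ⟨ξ, α̃_g ξ⟩`. For each trace `τ`,
`(ξ, η) ↦ τ ⟨ξ, η⟩` is a semi-inner product on `G →₀ A`, and since `α_g ⟨ξ, η⟩ = ⟨α̃_g ξ, α̃_g η⟩`
we get `θ(g⁻¹h)(g⁻¹·τ) = Re τ ⟨α̃_g ξ, α̃_h ξ⟩`: these matrices are real Gram matrices, hence
positive semidefinite. Cauchy–Schwarz, in this space and in the GNS space of `τ`, gives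
`|θ g τ - 1| ≤ ‖α̃_g ξ - ξ‖_{2,u} + ‖⟨ξ, ξ⟩ - 1‖_{2,u}`.
-/
open scoped ComplexOrder InnerProductSpace Pointwise

section InnerProduct

variable {ι : Type*}

lemma ip_eq_sum {ξ : ι →₀ A} (η : ι →₀ A) {s : Finset ι} (hs : ξ.support ⊆ s) :
    ip ξ η = ∑ i ∈ s, star (ξ i) * η i :=
  Finsupp.sum_of_support_subset ξ hs _ fun _ _ ↦ by simp

lemma star_ip (ξ η : ι →₀ A) : star (ip ξ η) = ip η ξ := by
  classical
  rw [ip_eq_sum η (Finset.subset_union_left (s₂ := η.support)),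
    ip_eq_sum ξ (Finset.subset_union_right (s₁ := ξ.support)), star_sum]
  simp only [star_mul, star_star]

lemma ip_add_left (ξ ξ' η : ι →₀ A) : ip (ξ + ξ') η = ip ξ η + ip ξ' η :=
  Finsupp.sum_add_index' (fun _ ↦ by simp) fun _ _ _ ↦ by simp [add_mul]

lemma ip_smul_left (c : ℂ) (ξ η : ι →₀ A) : ip (c • ξ) η = star c • ip ξ η := by
  rw [ip, Finsupp.sum_smul_index' fun _ ↦ by simp, ip, Finsupp.smul_sum]
  simp only [star_smul, smul_mul_assoc]

end InnerProduct

section SpectralOrder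

attribute [local instance] CStarAlgebra.spectralOrder CStarAlgebra.spectralOrderedRing

lemma ip_self_nonneg {ι : Type*} (ξ : ι →₀ A) : 0 ≤ ip ξ ξ :=
  Finset.sum_nonneg fun _ _ ↦ star_mul_self_nonneg _

namespace TS

variable (τ : TS A)

lemma apply_nonneg {a : A} (ha : 0 ≤ a) : 0 ≤ τ.1 a := by
  obtain ⟨b, rfl⟩ := CStarAlgebra.nonneg_iff_eq_star_mul_self.mp ha
  exact Complex.nonneg_iff.mpr ⟨(τ.2.2.1 b).1, (τ.2.2.1 b).2.symm⟩

def toPositiveLinearMap : A →ₚ[ℂ] ℂ :=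
  .mk₀ τ.1 fun _ ↦ τ.apply_nonneg

lemma map_star (a : A) : τ.1 (star a) = star (τ.1 a) :=
  StarHomClass.map_star τ.toPositiveLinearMap a

lemma re_apply_le_norm {a : A} (ha : 0 ≤ a) : (τ.1 a).re ≤ ‖a‖ := by
  have h := τ.toPositiveLinearMap.norm_apply_le_of_nonneg a ha
  have h1 : τ.toPositiveLinearMap 1 = 1 := τ.2.1
  rw [h1, norm_one, one_mul] at h
  exact (Complex.re_le_norm _).trans h

-- Cauchy–Schwarz in the GNS space of `τ`, where `τ a = ⟪1, a⟫` and `‖1‖ = 1`.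
lemma norm_apply_le_sqrt (a : A) : ‖τ.1 a‖ ≤ √(τ.1 (star a * a)).re := by
  set f := τ.toPositiveLinearMap
  have h := norm_inner_le_norm (𝕜 := ℂ) (f.toPreGNS 1) (f.toPreGNS a)
  have hf : ∀ x, f x = τ.1 x := fun _ ↦ rfl
  simp only [f.preGNS_inner_def, f.preGNS_norm_def, f.ofPreGNS_toPreGNS, star_one, one_mul, hf,
    τ.2.1, Complex.one_re, Real.sqrt_one] at h
  exact h

lemma re_apply_ip_self_le_norm {ι : Type*} (ξ : ι →₀ A) : (τ.1 (ip ξ ξ)).re ≤ ‖ip ξ ξ‖ :=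
  τ.re_apply_le_norm (ip_self_nonneg ξ)

lemma abs_re_apply_le_u2 (a : A) : |(τ.1 a).re| ≤ u2 a :=
  calc |(τ.1 a).re| ≤ ‖τ.1 a‖ := Complex.abs_re_le_norm _
    _ ≤ √(τ.1 (star a * a)).re := τ.norm_apply_le_sqrt a
    _ ≤ u2 a := le_ciSup (f := fun σ : TS A ↦ √(σ.1 (star a * a)).re) ⟨√‖star a * a‖,
        Set.forall_mem_range.2 fun σ ↦
          Real.sqrt_le_sqrt (σ.re_apply_le_norm (star_mul_self_nonneg a))⟩ τ

/-- `ι →₀ A` with the semi-inner product `τ ⟨ξ, η⟩`. -/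
def L2 (_ : TS A) (ι : Type*) : Type _ := ι →₀ A

variable {ι : Type*}

instance : AddCommGroup (τ.L2 ι) := inferInstanceAs (AddCommGroup (ι →₀ A))

instance : Module ℂ (τ.L2 ι) := inferInstanceAs (Module ℂ (ι →₀ A))

def toL2 : (ι →₀ A) ≃ₗ[ℂ] τ.L2 ι := LinearEquiv.refl ℂ _

abbrev l2Core : PreInnerProductSpace.Core ℂ (τ.L2 ι) where
  inner ξ η := τ.1 (ip (τ.toL2.symm ξ) (τ.toL2.symm η))
  conj_inner_symm ξ η := by
    rw [← Complex.star_def, ← τ.map_star, star_ip]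
  re_inner_nonneg ξ := (Complex.nonneg_iff.mp (τ.apply_nonneg (ip_self_nonneg _))).1
  add_left ξ ξ' η := by simp only [map_add, ip_add_left]
  smul_left ξ η c := by simp only [map_smul, ip_smul_left]; rfl

noncomputable instance : SeminormedAddCommGroup (τ.L2 ι) :=
  InnerProductSpace.Core.toSeminormedAddCommGroup (c := τ.l2Core)

noncomputable instance : InnerProductSpace ℂ (τ.L2 ι) :=
  InnerProductSpace.ofCore τ.l2Core

noncomputable instance : InnerProductSpace ℝ (τ.L2 ι) := .complexToReal

lemma inner_toL2 (ξ η : ι →₀ A) : ⟪τ.toL2 ξ, τ.toL2 η⟫_ℂ = τ.1 (ip ξ η) := rfl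

lemma norm_toL2_le_sqrt_norm (ξ : ι →₀ A) : ‖τ.toL2 ξ‖ ≤ √‖ip ξ ξ‖ :=
  Real.sqrt_le_sqrt (τ.re_apply_ip_self_le_norm ξ)

lemma norm_toL2_le_u2l (ξ : ι →₀ A) : ‖τ.toL2 ξ‖ ≤ u2l ξ :=
  le_ciSup (f := fun σ : TS A ↦ ‖σ.toL2 ξ‖)
    ⟨√‖ip ξ ξ‖, Set.forall_mem_range.2 fun σ ↦ σ.norm_toL2_le_sqrt_norm ξ⟩ τ

lemma norm_inner_toL2_le_u2l {ξ : ι →₀ A} (hξ : ‖ip ξ ξ‖ ≤ 1) (η : ι →₀ A) :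
    ‖⟪τ.toL2 ξ, τ.toL2 η⟫_ℂ‖ ≤ u2l η :=
  calc ‖⟪τ.toL2 ξ, τ.toL2 η⟫_ℂ‖ ≤ ‖τ.toL2 ξ‖ * ‖τ.toL2 η‖ := norm_inner_le_norm _ _
    _ ≤ 1 * u2l η := mul_le_mul ((τ.norm_toL2_le_sqrt_norm ξ).trans (Real.sqrt_le_one.2 hξ))
        (τ.norm_toL2_le_u2l η) (norm_nonneg _) zero_le_one
    _ = u2l η := one_mul _

end TS

end SpectralOrder

section DiagonalAction

variable (α : G →* (A ≃ₐ[ℂ] A))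

lemma diagAct_apply (g : G) (ξ : G →₀ A) (h : G) : diagAct α g ξ h = α g (ξ (g⁻¹ * h)) := by
  rw [diagAct, Finsupp.mapRange_apply,
    ← Finsupp.mapDomain_apply (mul_right_injective g) ξ, mul_inv_cancel_left]

lemma diagAct_one (ξ : G →₀ A) : diagAct α 1 ξ = ξ := by
  ext h
  simp [diagAct_apply]

lemma diagAct_mul (g k : G) (ξ : G →₀ A) :
    diagAct α (g * k) ξ = diagAct α g (diagAct α k ξ) := by
  ext h
  simp only [diagAct_apply, map_mul, AlgEquiv.mul_apply, mul_inv_rev, mul_assoc]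

lemma support_diagAct_subset (g : G) (ξ : G →₀ A) :
    (diagAct α g ξ).support ⊆ ξ.support.map (mulLeftEmbedding g) := by
  intro h hh
  rw [Finsupp.mem_support_iff, diagAct_apply] at hh
  exact Finset.mem_map.2 ⟨g⁻¹ * h, Finsupp.mem_support_iff.2 fun h0 ↦ hh (by rw [h0, map_zero]),
    mul_inv_cancel_left g h⟩

lemma ip_diagAct (hstar : ∀ (g : G) (a : A), α g (star a) = star (α g a)) (g : G)
    (ξ η : G →₀ A) : ip (diagAct α g ξ) (diagAct α g η) = α g (ip ξ η) := by
  rw [ip_eq_sum _ (support_diagAct_subset α g ξ), Finset.sum_map, ip_eq_sum η subset_rfl, map_sum]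
  refine Finset.sum_congr rfl fun h _ ↦ ?_
  simp [diagAct_apply, hstar]

lemma ip_diagAct_eq_zero [DecidableEq G] {g : G} {ξ : G →₀ A}
    (hg : g ∉ ξ.support * ξ.support⁻¹) : ip ξ (diagAct α g ξ) = 0 := by
  rw [ip_eq_sum _ subset_rfl]
  refine Finset.sum_eq_zero fun h hh ↦ ?_
  have : ξ (g⁻¹ * h) = 0 := by
    by_contra hne
    exact hg (Finset.mem_mul.2 ⟨h, hh, (g⁻¹ * h)⁻¹,
      Finset.mem_inv.2 ⟨g⁻¹ * h, Finsupp.mem_support_iff.2 hne, rfl⟩, by group⟩)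
  rw [diagAct_apply, this, map_zero, mul_zero]

end DiagonalAction

def traceMatrixCoeff (α : G →* (A ≃ₐ[ℂ] A)) (ξ : G →₀ A) (g : G) : C(TS A, ℝ) where
  toFun τ := (τ.1 (ip ξ (diagAct α g ξ))).re
  continuous_toFun := Complex.continuous_re.comp ((continuous_apply _).comp continuous_induced_dom)

section TraceMatrixCoeff

variable (α : G →* (A ≃ₐ[ℂ] A)) {ξ : G →₀ A}

lemma traceMatrixCoeff_apply (g : G) (τ : TS A) :
    traceMatrixCoeff α ξ g τ = (τ.1 (ip ξ (diagAct α g ξ))).re := rfl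

lemma traceMatrixCoeff_eq_zero [DecidableEq G] {g : G} (hg : g ∉ ξ.support * ξ.support⁻¹) :
    traceMatrixCoeff α ξ g = 0 := by
  ext τ
  rw [traceMatrixCoeff_apply, ip_diagAct_eq_zero α hg, map_zero, Complex.zero_re,
    ContinuousMap.zero_apply]

lemma traceMatrixCoeff_inv_mul_apply (hstar : ∀ (g : G) (a : A), α g (star a) = star (α g a))
    {ρ : G → TS A → TS A} (hρ : ∀ (g : G) (τ : TS A) (a : A), (ρ g τ).1 a = τ.1 (α g⁻¹ a))
    (g h : G) (τ : TS A) :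
    traceMatrixCoeff α ξ (g⁻¹ * h) (ρ g⁻¹ τ) =
      ⟪τ.toL2 (diagAct α g ξ), τ.toL2 (diagAct α h ξ)⟫_ℝ := by
  rw [traceMatrixCoeff_apply, hρ, inv_inv, ← ip_diagAct α hstar, ← diagAct_mul,
    mul_inv_cancel_left, real_inner_eq_re_inner ℂ, τ.inner_toL2]
  rfl

lemma traceMatrixCoeff_posSemidef (hstar : ∀ (g : G) (a : A), α g (star a) = star (α g a))
    {ρ : G → TS A → TS A} (hρ : ∀ (g : G) (τ : TS A) (a : A), (ρ g τ).1 a = τ.1 (α g⁻¹ a))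
    (L : Finset G) (τ : TS A) :
    (Matrix.of fun g h : L ↦ traceMatrixCoeff α ξ ((g : G)⁻¹ * h) (ρ (g : G)⁻¹ τ)).PosSemidef := by
  have hgram : (Matrix.of fun g h : L ↦ traceMatrixCoeff α ξ ((g : G)⁻¹ * h) (ρ (g : G)⁻¹ τ)) =
      Matrix.gram ℝ fun g : L ↦ τ.toL2 (diagAct α g ξ) := by
    ext g h
    exact traceMatrixCoeff_inv_mul_apply α hstar hρ g h τ
  rw [hgram]
  exact Matrix.posSemidef_gram ℝ _

lemma traceMatrixCoeff_one_le (hξ : ‖ip ξ ξ‖ ≤ 1) (τ : TS A) : traceMatrixCoeff α ξ 1 τ ≤ 1 := by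
  rw [traceMatrixCoeff_apply, diagAct_one]
  exact (τ.re_apply_ip_self_le_norm ξ).trans hξ

lemma abs_traceMatrixCoeff_sub_one_le (hξ : ‖ip ξ ξ‖ ≤ 1) (g : G) (τ : TS A) :
    |traceMatrixCoeff α ξ g τ - 1| ≤ u2l (diagAct α g ξ - ξ) + u2 (ip ξ ξ - 1) := by
  have hsplit : traceMatrixCoeff α ξ g τ - 1 =
      (⟪τ.toL2 ξ, τ.toL2 (diagAct α g ξ - ξ)⟫_ℂ).re + (τ.1 (ip ξ ξ - 1)).re := by
    rw [map_sub, inner_sub_right, τ.inner_toL2, τ.inner_toL2, map_sub, τ.2.1,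
      traceMatrixCoeff_apply]
    simp only [Complex.sub_re, Complex.one_re]
    ring
  rw [hsplit]
  exact (abs_add_le _ _).trans (add_le_add
    ((Complex.abs_re_le_norm _).trans (τ.norm_inner_toL2_le_u2l hξ _)) (τ.abs_re_apply_le_u2 _))

end TraceMatrixCoeff

theorem topologicallyAmenable_of_traciallyAmenable_general
    (α : G →* (A ≃ₐ[ℂ] A))
    (hstar : ∀ (g : G) (a : A), α g (star a) = star (α g a))
    (hTA : IsTraciallyAmenable α)
    (ρ : G → TS A → TS A)
    (hρ : ∀ (g : G) (τ : TS A) (a : A), (ρ g τ).1 a = τ.1 (α g⁻¹ a)) :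
    TopologicallyAmenableAction ρ := by
  classical
  intro K ε hε
  obtain ⟨ξ, hξ, -, hunit, hinv⟩ := hTA ∅ K (ε / 2) (half_pos hε)
  have hξ' : ‖ip ξ ξ‖ ≤ 1 := Real.sqrt_le_one.1 hξ
  refine ⟨ξ.support * ξ.support⁻¹, traceMatrixCoeff α ξ,
    fun _ hg ↦ traceMatrixCoeff_eq_zero α hg, traceMatrixCoeff_posSemidef α hstar hρ,
    traceMatrixCoeff_one_le α hξ', fun g hg τ ↦ ?_⟩
  calc |traceMatrixCoeff α ξ g τ - 1| ≤ u2l (diagAct α g ξ - ξ) + u2 (ip ξ ξ - 1) :=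
        abs_traceMatrixCoeff_sub_one_le α hξ' g τ
    _ < ε / 2 + ε / 2 := add_lt_add (hinv g hg) hunit
    _ = ε := add_halves ε

/-- Theorem 3.4, (1) ⟹ (4): a tracially amenable action of a discrete
group on a separable unital C*-algebra with `T(A) ≠ ∅` induces a topologically
amenable action `g·τ = τ ∘ α_{g⁻¹}` on the trace space `T(A)`. -/
theorem topologicallyAmenable_of_traciallyAmenable
    [TopologicalSpace.SeparableSpace A]
    (α : G →* (A ≃ₐ[ℂ] A))
    (hstar : ∀ (g : G) (a : A), α g (star a) = star (α g a))
    (hT : Nonempty (TS A))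
    (hTA : IsTraciallyAmenable α)
    (ρ : G → TS A → TS A)
    (hρ : ∀ (g : G) (τ : TS A) (a : A), (ρ g τ).1 a = τ.1 (α g⁻¹ a)) :
    TopologicallyAmenableAction ρ :=
  topologicallyAmenable_of_traciallyAmenable_general α hstar hTA ρ hρ
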